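/- arXiv:2205.07197 — 8 statements merged into one kernel-verified Lean document; each statement's English description precedes it below -/
import Mathlib

section
/- Let Γ be a GKM-graph with axial function α : E → ℤ^k, and let Ξ be a face of Γ. For any two vertices p, q of Ξ, the ℤ-span of {α(e) : e ∈ star_Ξ(p)} equals the ℤ-span of {α(e) : e ∈ star_Ξ(q)}. (Hence the span α⟨Ξ⟩ of a face is well defined.) -/
/-- The star of a set `F` of (directed) edges at a vertex `v`:
all edges in `F` with initial vertex `v`. -/
def edgeStar {V : Type} (F : Set (V × V)) (v : V) : Set (V × V) :=
  {e ∈ F | e.1 = v}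

/-- A GKM-graph on the vertex type `V`, with connection `nabla` and axial
function `alpha` taking values in `ℤ^k`.  Edges are ordered pairs of distinct
vertices; the edge set is closed under reversal and the underlying graph is
connected.  The connection `∇_e` restricts to a bijection from the star of
`i(e)` onto the star of `t(e)` sending `e` to its reversal, and the axial
function satisfies the rank, opposite sign and congruence conditions. -/
structure GKMGraph (V : Type) (k : ℕ) : Type where
  E : Set (V × V)
  nabla : V × V → V × V → V × V
  alpha : V × V → Fin k → ℤ
  vert_nonempty : Nonempty V
  no_loops : ∀ e ∈ E, e.1 ≠ e.2
  rev_mem : ∀ e ∈ E, (e.2, e.1) ∈ E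
  graph_connected : ∀ u v : V, Relation.ReflTransGen (fun a b => (a, b) ∈ E) u v
  nabla_bijOn : ∀ e ∈ E, Set.BijOn (nabla e) (edgeStar E e.1) (edgeStar E e.2)
  nabla_self : ∀ e ∈ E, nabla e e = (e.2, e.1)
  rank : ∀ v : V, Submodule.span ℤ (alpha '' edgeStar E v) = ⊤
  opposite : ∀ e ∈ E, alpha (e.2, e.1) = -alpha e
  congruence : ∀ e ∈ E, ∀ e' ∈ E, e'.1 = e.1 →
    ∃ c : ℤ, alpha (nabla e e') = alpha e' + c • alpha e

namespace GKMGraph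

variable {V : Type} {k : ℕ}

/-- The star of the GKM-graph `Γ` at a vertex `v`. -/
def star (Γ : GKMGraph V k) (v : V) : Set (V × V) := edgeStar Γ.E v

/-- `Γ.IsFace W F` : the subgraph with vertex set `W` and edge set `F` is a
face (totally geodesic subgraph) of `Γ`: it is a nonempty connected regular
subgraph closed under edge reversal and invariant under the connection. -/
structure IsFace (Γ : GKMGraph V k) (W : Set V) (F : Set (V × V)) : Prop where
  nonempty : W.Nonempty
  sub : F ⊆ Γ.E
  src_mem : ∀ e ∈ F, e.1 ∈ W
  tgt_mem : ∀ e ∈ F, e.2 ∈ W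
  rev_mem : ∀ e ∈ F, (e.2, e.1) ∈ F
  connected : ∀ u ∈ W, ∀ v ∈ W, Relation.ReflTransGen (fun a b => (a, b) ∈ F) u v
  invariant : ∀ e ∈ F, ∀ e' ∈ F, e'.1 = e.1 → Γ.nabla e e' ∈ F
  regular : ∃ r : ℕ, ∀ v ∈ W, (edgeStar F v).Finite ∧ (edgeStar F v).ncard = r

/-- `Γ.IsNFace W F r` : the subgraph `(W, F)` is an `r`-face of `Γ`,
i.e. a face all of whose stars have exactly `r` elements. -/
def IsNFace (Γ : GKMGraph V k) (W : Set V) (F : Set (V × V)) (r : ℕ) : Prop :=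
  Γ.IsFace W F ∧ ∀ v ∈ W, (edgeStar F v).Finite ∧ (edgeStar F v).ncard = r

/-- The span `α⟨Ξ⟩` of a face with edge set `F`, computed at the vertex `v`. -/
def faceSpan (Γ : GKMGraph V k) (F : Set (V × V)) (v : V) : Submodule ℤ (Fin k → ℤ) :=
  Submodule.span ℤ (Γ.alpha '' edgeStar F v)

/-- `Π_γ`, the composite `∇_{e_r} ∘ ⋯ ∘ ∇_{e_1}` of the connection along the
edge path `γ = (e_1, …, e_r)`, applied to an edge `e`. -/
def transport (Γ : GKMGraph V k) (γ : List (V × V)) (e : V × V) : V × V :=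
  γ.foldl (fun x g => Γ.nabla g x) e

/-- An edge of `Γ` transversal to the subgraph `(W, F)`:
it emanates from a vertex of `W` but does not belong to `F`. -/
def IsTransversal (Γ : GKMGraph V k) (W : Set V) (F : Set (V × V)) (e : V × V) : Prop :=
  e ∈ Γ.E ∧ e ∉ F ∧ e.1 ∈ W

/-- A chord of the subgraph `(W, F)`: a transversal edge both of whose
endpoints lie in `W`. -/
def IsChord (Γ : GKMGraph V k) (W : Set V) (F : Set (V × V)) (e : V × V) : Prop :=
  Γ.IsTransversal W F e ∧ e.2 ∈ W

/-- `Γ` is `j`-independent: the values of the axial function on any `j`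
distinct edges with a common origin are linearly independent over `ℤ`. -/
def IsIndependent (Γ : GKMGraph V k) (j : ℕ) : Prop :=
  ∀ v : V, ∀ s : Finset (V × V), ↑s ⊆ Γ.star v → s.card = j →
    LinearIndependent ℤ (fun e : {x : V × V // x ∈ s} => Γ.alpha e.1)

/-- `Γ` is `j`-complete: any `i ≤ j` distinct edges with a common origin `v`
form the star at `v` of some `i`-face of `Γ`. -/
def IsComplete (Γ : GKMGraph V k) (j : ℕ) : Prop :=
  ∀ v : V, ∀ i : ℕ, i ≤ j → ∀ s : Finset (V × V), ↑s ⊆ Γ.star v → s.card = i →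
    ∃ (W : Set V) (F : Set (V × V)), Γ.IsNFace W F i ∧ v ∈ W ∧ edgeStar F v = ↑s

/-- `Γ` is `n`-valent: every star of `Γ` has exactly `n` elements. -/
def IsValent (Γ : GKMGraph V k) (n : ℕ) : Prop :=
  ∀ v : V, (Γ.star v).Finite ∧ (Γ.star v).ncard = n

/-- `Γ'` is an extension of `Γ`: both GKM-graphs have the same underlying
graph and the same connection, and there is a surjective homomorphism
`p : ℤ^{k'} → ℤ^k` with `p ∘ α' = α` on all edges. -/
def IsExtension {k' : ℕ} (Γ' : GKMGraph V k') (Γ : GKMGraph V k) : Prop :=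
  Γ'.E = Γ.E ∧
  (∀ e ∈ Γ.E, ∀ e' ∈ Γ.E, e'.1 = e.1 → Γ'.nabla e e' = Γ.nabla e e') ∧
  ∃ p : (Fin k' → ℤ) →ₗ[ℤ] (Fin k → ℤ), Function.Surjective p ∧
    ∀ e ∈ Γ.E, p (Γ'.alpha e) = Γ.alpha e

end GKMGraph

/-- An edge path contained in the edge set `F`: consecutive edges are
composable (`t(e_m) = i(e_{m+1})`). -/
def IsEdgePathIn {V : Type} (F : Set (V × V)) (γ : List (V × V)) : Prop :=
  (∀ g ∈ γ, g ∈ F) ∧ γ.Chain' (fun g h => g.2 = h.1)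

/-!
For an edge `e = (u, v)` of the face, the connection `∇_e` carries the face star at `u` into
the face star at `v`, and by the congruence condition it changes each `α(e')` only by a
multiple of `α(e) = -α(ē)`, which lies in the face span at `v`. Hence the span at `u` is
contained in the span at `v`; applying this to `ē` as well, the spans at adjacent vertices
agree, and connectedness of the face finishes the proof.
-/

namespace GKMGraph

variable {V : Type} {k : ℕ} (Γ : GKMGraph V k) {F : Set (V × V)}

theorem faceSpan_le_of_mem (hsub : F ⊆ Γ.E)
    (hinv : ∀ e ∈ F, ∀ e' ∈ F, e'.1 = e.1 → Γ.nabla e e' ∈ F)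
    {u v : V} (huv : (u, v) ∈ F) (hvu : (v, u) ∈ F) :
    Γ.faceSpan F u ≤ Γ.faceSpan F v := by
  refine Submodule.span_le.2 ?_
  rintro _ ⟨e, ⟨heF, rfl⟩, rfl⟩
  have hE : (e.1, v) ∈ Γ.E := hsub huv
  have hmem : Γ.nabla (e.1, v) e ∈ edgeStar F v :=
    ⟨hinv _ huv e heF rfl, ((Γ.nabla_bijOn _ hE).mapsTo ⟨hsub heF, rfl⟩).2⟩
  obtain ⟨c, hc⟩ := Γ.congruence _ hE e (hsub heF) rfl
  have hα : Γ.alpha e = Γ.alpha (Γ.nabla (e.1, v) e) + c • Γ.alpha (v, e.1) := by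
    rw [hc, Γ.opposite _ hE, smul_neg, add_neg_cancel_right]
  rw [hα]
  exact add_mem (Submodule.subset_span ⟨_, hmem, rfl⟩)
    (Submodule.smul_mem _ _ (Submodule.subset_span ⟨_, ⟨hvu, rfl⟩, rfl⟩))

theorem faceSpan_eq_of_mem (hsub : F ⊆ Γ.E) (hrev : ∀ e ∈ F, (e.2, e.1) ∈ F)
    (hinv : ∀ e ∈ F, ∀ e' ∈ F, e'.1 = e.1 → Γ.nabla e e' ∈ F)
    {u v : V} (huv : (u, v) ∈ F) :
    Γ.faceSpan F u = Γ.faceSpan F v :=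
  le_antisymm (Γ.faceSpan_le_of_mem hsub hinv huv (hrev _ huv))
    (Γ.faceSpan_le_of_mem hsub hinv (hrev _ huv) huv)

theorem faceSpan_eq_of_reflTransGen (hsub : F ⊆ Γ.E) (hrev : ∀ e ∈ F, (e.2, e.1) ∈ F)
    (hinv : ∀ e ∈ F, ∀ e' ∈ F, e'.1 = e.1 → Γ.nabla e e' ∈ F)
    {u v : V} (huv : Relation.ReflTransGen (fun a b => (a, b) ∈ F) u v) :
    Γ.faceSpan F u = Γ.faceSpan F v := by
  induction huv with
  | refl => rfl
  | tail _ hbc ih => exact ih.trans (Γ.faceSpan_eq_of_mem hsub hrev hinv hbc)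

end GKMGraph

/-- the span of a face of a GKM-graph does not depend on the
choice of vertex at which it is computed. -/
theorem span_of_face_well_defined {V : Type} {k : ℕ} (Γ : GKMGraph V k)
    (W : Set V) (F : Set (V × V)) (hF : Γ.IsFace W F)
    (p q : V) (hp : p ∈ W) (hq : q ∈ W) :
    Submodule.span ℤ (Γ.alpha '' edgeStar F p) =
      Submodule.span ℤ (Γ.alpha '' edgeStar F q) :=
  Γ.faceSpan_eq_of_reflTransGen hF.sub hF.rev_mem hF.invariant (hF.connected p hp q hq)
end

section
/- Let Γ be a (j+1)-complete GKM-graph, let Ξ be a j-face of Γ, and let e ∈ E be a chord of Ξ. Then for every edge path γ = (e_1, …, e_r) contained in Ξ with i(γ) = i(e) and t(γ) = t(e), one has Π_γ(e) = ē. -/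
section Aux

variable {V : Type} {k j : ℕ} (Γ : GKMGraph V k) {W W' : Set V} {F F' : Set (V × V)}

/-- The connection along an edge of a face maps the face's star at the source
bijectively onto the face's star at the target. -/
lemma image_star (hF : Γ.IsNFace W F j) {g : V × V} (hg : g ∈ F) :
    Γ.nabla g '' edgeStar F g.1 = edgeStar F g.2 := by
  have hgE : g ∈ Γ.E := hF.1.sub hg
  have h1 := hF.2 g.1 (hF.1.src_mem g hg)
  have h2 := hF.2 g.2 (hF.1.tgt_mem g hg)
  have hmaps : Set.MapsTo (Γ.nabla g) (edgeStar F g.1) (edgeStar F g.2) := by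
    intro y hy
    have hyE : y ∈ edgeStar Γ.E g.1 := ⟨hF.1.sub hy.1, hy.2⟩
    exact ⟨hF.1.invariant g hg y hy.1 hy.2, ((Γ.nabla_bijOn g hgE).mapsTo hyE).2⟩
  have hinj : Set.InjOn (Γ.nabla g) (edgeStar F g.1) :=
    (Γ.nabla_bijOn g hgE).injOn.mono (fun y hy => show y ∈ edgeStar Γ.E g.1 from ⟨hF.1.sub hy.1, hy.2⟩)
  apply Set.eq_of_subset_of_ncard_le hmaps.image_subset ?_ h2.1
  rw [Set.ncard_image_of_injOn hinj, h1.2, h2.2]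

/-- Transporting an edge not in the face along an edge of the face yields an
edge not in the face. -/
lemma nabla_not_mem (hF : Γ.IsNFace W F j) {g : V × V} (hg : g ∈ F)
    (x : V × V) (hxE : x ∈ Γ.E) (hx1 : x.1 = g.1) (hxF : x ∉ F) :
    Γ.nabla g x ∉ F := by
  intro h
  have hgE : g ∈ Γ.E := hF.1.sub hg
  have hxE' : x ∈ edgeStar Γ.E g.1 := ⟨hxE, hx1⟩
  have hsrc : (Γ.nabla g x).1 = g.2 := ((Γ.nabla_bijOn g hgE).mapsTo hxE').2
  have hmem : Γ.nabla g x ∈ Γ.nabla g '' edgeStar F g.1 :=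
    (image_star Γ hF hg) ▸ (⟨h, hsrc⟩ : Γ.nabla g x ∈ edgeStar F g.2)
  obtain ⟨y, hy, hyx⟩ := hmem
  have hyE' : y ∈ edgeStar Γ.E g.1 := ⟨hF.1.sub hy.1, hy.2⟩
  have : y = x := (Γ.nabla_bijOn g hgE).injOn hyE' hxE' hyx
  exact hxF (this ▸ hy.1)

/-- If a face's star at a vertex is contained in another face, then so is
its star at every vertex reachable within the face. -/
lemma star_subset_of_reachable (hF : Γ.IsNFace W F j) (hF' : Γ.IsFace W' F')
    {v0 : V} (hbase : edgeStar F v0 ⊆ F') :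
    ∀ u, Relation.ReflTransGen (fun a b => (a, b) ∈ F) v0 u →
      edgeStar F u ⊆ F' := by
  intro u hu
  induction hu with
  | refl => exact hbase
  | @tail b c _ h2 ih =>
    intro x hx
    have hx' : x ∈ Γ.nabla (b, c) '' edgeStar F (b, c).1 :=
      (image_star Γ hF h2) ▸ hx
    obtain ⟨y, hy, rfl⟩ := hx'
    exact hF'.invariant (b, c) (ih ⟨h2, rfl⟩) y (ih hy) hy.2

/-- Transport along a path in a face of an edge of a larger face that is
transversal to the smaller face. -/
lemma transport_aux (hF : Γ.IsNFace W F j) (hF' : Γ.IsFace W' F') (hsub : F ⊆ F') :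
    ∀ γ : List (V × V), IsEdgePathIn F γ → ∀ (hne : γ ≠ []) (x : V × V),
      x ∈ Γ.E → x ∈ F' → x ∉ F → (γ.head hne).1 = x.1 →
      Γ.transport γ x ∈ F' ∧ Γ.transport γ x ∉ F ∧
        (Γ.transport γ x).1 = (γ.getLast hne).2 := by
  intro γ
  induction γ with
  | nil => intro _ hne; exact absurd rfl hne
  | cons g rest ih =>
    intro hγ hne x hxE hxF' hxF hhead
    have hgF : g ∈ F := hγ.1 g List.mem_cons_self
    have hgE : g ∈ Γ.E := hF.1.sub hgF
    have hx1 : x.1 = g.1 := hhead.symm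
    have hxE' : x ∈ edgeStar Γ.E g.1 := ⟨hxE, hx1⟩
    have hyE : Γ.nabla g x ∈ Γ.E := ((Γ.nabla_bijOn g hgE).mapsTo hxE').1
    have hy1 : (Γ.nabla g x).1 = g.2 := ((Γ.nabla_bijOn g hgE).mapsTo hxE').2
    have hyF : Γ.nabla g x ∉ F := nabla_not_mem Γ hF hgF x hxE hx1 hxF
    have hyF' : Γ.nabla g x ∈ F' := hF'.invariant g (hsub hgF) x hxF' hx1
    have htr : Γ.transport (g :: rest) x = Γ.transport rest (Γ.nabla g x) := rfl
    cases rest with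
    | nil =>
      refine ⟨hyF', hyF, ?_⟩
      simpa [GKMGraph.transport] using hy1
    | cons h2 t =>
      have hch := List.isChain_cons_cons.mp hγ.2
      have hrest : IsEdgePathIn F (h2 :: t) :=
        ⟨fun a ha => hγ.1 a (List.mem_cons_of_mem _ ha), hch.2⟩
      have hres := ih hrest (by simp) (Γ.nabla g x) hyE hyF' hyF
        (by simpa using (hy1.trans hch.1).symm)
      rw [htr]
      refine ⟨hres.1, hres.2.1, ?_⟩
      rw [hres.2.2]
      simp [List.getLast_cons]

end Aux

/-- in a `(j+1)`-complete GKM-graph, for any chord `e` of a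
`j`-face and any edge path `γ` in the face from `i(e)` to `t(e)`, the
connection transports `e` along `γ` to its reversal `ē`. -/
theorem transport_chord_eq_reverse {V : Type} {k : ℕ} (Γ : GKMGraph V k)
    (j : ℕ) (hcomp : Γ.IsComplete (j + 1))
    (W : Set V) (F : Set (V × V)) (hF : Γ.IsNFace W F j)
    (e : V × V) (he : Γ.IsChord W F e)
    (γ : List (V × V)) (hγ : IsEdgePathIn F γ) (hne : γ ≠ [])
    (hstart : (γ.head hne).1 = e.1) (hend : (γ.getLast hne).2 = e.2) :
    Γ.transport γ e = (e.2, e.1) := by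
  classical
  obtain ⟨⟨heE, heF, he1W⟩, he2W⟩ := he
  have hfin0 : (edgeStar F e.1).Finite := (hF.2 e.1 he1W).1
  have hn0 : (edgeStar F e.1).ncard = j := (hF.2 e.1 he1W).2
  -- the star of the face at `i(e)` together with `e`
  set s : Finset (V × V) := insert e hfin0.toFinset with hs
  have he_not : e ∉ hfin0.toFinset := by
    simp only [Set.Finite.mem_toFinset]
    exact fun h => heF h.1
  have htf : hfin0.toFinset.card = j := by
    rw [← Set.ncard_eq_toFinset_card _ hfin0]; exact hn0
  have hcard : s.card = j + 1 := by
    rw [hs, Finset.card_insert_of_notMem he_not, htf]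
  have hssub : ↑s ⊆ Γ.star e.1 := by
    intro x hx
    simp only [hs, Finset.coe_insert, Set.mem_insert_iff, Set.Finite.coe_toFinset] at hx
    rcases hx with rfl | hx
    · exact ⟨heE, rfl⟩
    · exact ⟨hF.1.sub hx.1, hx.2⟩
  obtain ⟨W', F', hF', hv0W', hstar'⟩ := hcomp e.1 (j + 1) le_rfl s hssub hcard
  have heF' : e ∈ F' := by
    have : e ∈ edgeStar F' e.1 := by
      rw [hstar']; simp [hs]
    exact this.1
  -- the face `F` is contained in `F'`
  have hbase : edgeStar F e.1 ⊆ F' := by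
    intro x hx
    have : x ∈ edgeStar F' e.1 := by
      rw [hstar']
      simp only [hs, Finset.coe_insert, Set.mem_insert_iff, Set.Finite.coe_toFinset]
      exact Or.inr hx
    exact this.1
  have hsub : F ⊆ F' := by
    intro g hg
    exact star_subset_of_reachable Γ hF hF'.1 hbase g.1
      (hF.1.connected e.1 he1W g.1 (hF.1.src_mem g hg)) ⟨hg, rfl⟩
  -- the reversal of `e`
  have hrevF' : (e.2, e.1) ∈ F' := hF'.1.rev_mem e heF'
  have hrevF : (e.2, e.1) ∉ F := by
    intro h
    exact heF (by simpa using hF.1.rev_mem _ h)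
  -- transport `e` along `γ`
  obtain ⟨htF', htF, ht1⟩ := transport_aux Γ hF hF'.1 hsub γ hγ hne e heE heF' heF hstart
  -- counting: the complement of the star of `F` in that of `F'` at `t(e)` is a singleton
  have he2W' : e.2 ∈ W' := hF'.1.src_mem (e.2, e.1) hrevF'
  have hfin' : (edgeStar F' e.2).Finite := (hF'.2 e.2 he2W').1
  have hn' : (edgeStar F' e.2).ncard = j + 1 := (hF'.2 e.2 he2W').2
  have hfin2 : (edgeStar F e.2).Finite := (hF.2 e.2 he2W).1
  have hn2 : (edgeStar F e.2).ncard = j := (hF.2 e.2 he2W).2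
  have hstarsub : edgeStar F e.2 ⊆ edgeStar F' e.2 := fun x hx => ⟨hsub hx.1, hx.2⟩
  have hdiff : (edgeStar F' e.2 \ edgeStar F e.2).ncard = 1 := by
    rw [Set.ncard_diff hstarsub hfin2, hn', hn2]
    omega
  obtain ⟨a, ha⟩ := Set.ncard_eq_one.mp hdiff
  have h1 : Γ.transport γ e ∈ edgeStar F' e.2 \ edgeStar F e.2 := by
    refine ⟨⟨htF', ht1.trans hend⟩, ?_⟩
    exact fun h => htF h.1
  have h2 : (e.2, e.1) ∈ edgeStar F' e.2 \ edgeStar F e.2 := by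
    refine ⟨⟨hrevF', rfl⟩, ?_⟩
    exact fun h => hrevF h.1
  rw [ha] at h1 h2
  rw [Set.mem_singleton_iff] at h1 h2
  rw [h1, h2]
end

section
/- Let Γ be a GKM-graph with axial function α : E → ℤ^k, let Ξ be a face of Γ and let e ∈ E be a chord of Ξ. Suppose there exists an edge path γ contained in Ξ with i(γ) = i(e), t(γ) = t(e) and Π_γ(e) = ē. Then 2·α(e) lies in the span α⟨Ξ⟩. -/
namespace GKMGraph

lemma faceSpan_le_of_edge {V : Type} {k : ℕ} (Γ : GKMGraph V k)
    {W : Set V} {F : Set (V × V)} (hF : Γ.IsFace W F) {u v : V} (hg : (u, v) ∈ F) :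
    Γ.faceSpan F u ≤ Γ.faceSpan F v := by
  rw [faceSpan, Submodule.span_le]
  rintro x ⟨e', ⟨he'F, he'1⟩, rfl⟩
  have hgE : (u, v) ∈ Γ.E := hF.sub hg
  have he'E : e' ∈ Γ.E := hF.sub he'F
  obtain ⟨c, hc⟩ := Γ.congruence (u, v) hgE e' he'E (by rw [he'1])
  have hmem : Γ.nabla (u, v) e' ∈ F := hF.invariant (u, v) hg e' he'F (by rw [he'1])
  have hrev : (v, u) ∈ F := hF.rev_mem (u, v) hg
  have h1 : Γ.alpha (Γ.nabla (u, v) e') ∈ Γ.faceSpan F v := by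
    apply Submodule.subset_span
    have hsrc : (Γ.nabla (u, v) e').1 = v :=
      ((Γ.nabla_bijOn (u, v) hgE).mapsTo
        (show e' ∈ edgeStar Γ.E u from ⟨he'E, by rw [he'1]⟩)).2
    exact ⟨Γ.nabla (u, v) e', ⟨hmem, hsrc⟩, rfl⟩
  have h2 : Γ.alpha (u, v) ∈ Γ.faceSpan F v := by
    have hm : Γ.alpha (v, u) ∈ Γ.faceSpan F v :=
      Submodule.subset_span ⟨(v, u), ⟨hrev, rfl⟩, rfl⟩
    have hopp := Γ.opposite (u, v) hgE
    have hneg := Submodule.neg_mem _ hm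
    rwa [hopp, neg_neg] at hneg
  have heq : Γ.alpha e' = Γ.alpha (Γ.nabla (u, v) e') - c • Γ.alpha (u, v) := by
    rw [hc]; abel
  rw [heq]
  exact Submodule.sub_mem _ h1 (Submodule.smul_mem _ c h2)

set_option maxHeartbeats 1000000 in
lemma transport_sub_mem {V : Type} {k : ℕ} (Γ : GKMGraph V k)
    {W : Set V} {F : Set (V × V)} (hF : Γ.IsFace W F) :
    ∀ (γ : List (V × V)) (e : V × V), e ∈ Γ.E → (∀ g ∈ γ, g ∈ F) →
      γ.Chain' (fun g h => g.2 = h.1) → (∀ hne : γ ≠ [], (γ.head hne).1 = e.1) →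
      Γ.alpha (Γ.transport γ e) - Γ.alpha e ∈ Γ.faceSpan F e.1 := by
  intro γ
  induction γ with
  | nil =>
    intro e heE _ _ _
    simp [transport]
  | cons g γ' ih =>
    intro e heE hmem hchain hhead
    have hgF : g ∈ F := hmem g List.mem_cons_self
    have hgE : g ∈ Γ.E := hF.sub hgF
    have hg1 : g.1 = e.1 := hhead (by simp)
    have he'star := (Γ.nabla_bijOn g hgE).mapsTo
      (show e ∈ edgeStar Γ.E g.1 from ⟨heE, hg1.symm⟩)
    have he'E : Γ.nabla g e ∈ Γ.E := he'star.1
    have he'1 : (Γ.nabla g e).1 = g.2 := he'star.2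
    obtain ⟨c, hc⟩ := Γ.congruence g hgE e heE hg1.symm
    have hchain' : γ'.Chain' (fun g h => g.2 = h.1) := hchain.tail
    have hhead' : ∀ hne : γ' ≠ [], (γ'.head hne).1 = (Γ.nabla g e).1 := by
      intro hne
      rw [he'1]
      cases γ' with
      | nil => exact absurd rfl hne
      | cons a l =>
        have hcc := List.isChain_cons_cons.mp hchain
        simp [hcc.1.symm]
    have hIH := ih (Γ.nabla g e) he'E (fun x hx => hmem x (List.mem_cons_of_mem _ hx))
      hchain' hhead'
    have htr : Γ.transport (g :: γ') e = Γ.transport γ' (Γ.nabla g e) := rfl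
    have hle : Γ.faceSpan F (Γ.nabla g e).1 ≤ Γ.faceSpan F e.1 := by
      rw [he'1, ← hg1]
      have hrev : (g.2, g.1) ∈ F := hF.rev_mem g hgF
      exact Γ.faceSpan_le_of_edge hF hrev
    have h1 : Γ.alpha (Γ.transport γ' (Γ.nabla g e)) - Γ.alpha (Γ.nabla g e)
        ∈ Γ.faceSpan F e.1 := hle hIH
    have h2 : Γ.alpha (Γ.nabla g e) - Γ.alpha e ∈ Γ.faceSpan F e.1 := by
      have hgmem : Γ.alpha g ∈ Γ.faceSpan F e.1 :=
        Submodule.subset_span ⟨g, ⟨hgF, hg1⟩, rfl⟩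
      have heq : Γ.alpha (Γ.nabla g e) - Γ.alpha e = c • Γ.alpha g := by rw [hc]; abel
      rw [heq]
      exact Submodule.smul_mem _ c hgmem
    have hsum := Submodule.add_mem _ h1 h2
    rw [htr]
    convert hsum using 1
    abel

end GKMGraph

/-- if a chord `e` of a face `(W, F)` of a GKM-graph is
transported to its reversal along some edge path in the face from `i(e)` to
`t(e)`, then `2·α(e)` lies in the span `α⟨Ξ⟩` of the face. -/
theorem two_smul_alpha_chord_mem_faceSpan {V : Type} {k : ℕ} (Γ : GKMGraph V k)
    (W : Set V) (F : Set (V × V)) (hF : Γ.IsFace W F)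
    (e : V × V) (he : Γ.IsChord W F e)
    (hpath : ∃ (γ : List (V × V)) (hne : γ ≠ []), IsEdgePathIn F γ ∧
      (γ.head hne).1 = e.1 ∧ (γ.getLast hne).2 = e.2 ∧
      Γ.transport γ e = (e.2, e.1)) :
    (2 : ℤ) • Γ.alpha e ∈ Γ.faceSpan F e.1 := by
  obtain ⟨γ, hne, ⟨hmem, hchain⟩, hhead, hlast, htr⟩ := hpath
  have heE : e ∈ Γ.E := he.1.1
  have h := Γ.transport_sub_mem hF γ e heE hmem hchain (fun _ => hhead)
  rw [htr, Γ.opposite e heE] at h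
  have h2 := Submodule.neg_mem _ h
  have heq : -(-Γ.alpha e - Γ.alpha e) = (2 : ℤ) • Γ.alpha e := by
    rw [two_smul]; abel
  rwa [heq] at h2
end

section
/- Let Γ be an n-valent GKM-graph whose underlying graph has finitely many vertices. If Γ is n-independent, then every face of Γ is chordless. -/
/-! A chord `e` from `u` to `w` can be transported along a path of the face from `u` to `w`;
the congruence condition shows that the resulting edge `e'` at `w` satisfies
`α(e') - α(e) ∈ α⟨Ξ⟩`, and `α⟨Ξ⟩` is spanned at `w` by the face edges at `w`.  Hence
`α(e') + α(ē)` lies in the span of the face star at `w`, which contradicts the linear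
independence of the whole star at `w`, since `ē` is not a face edge. -/

open Submodule Finsupp in
theorem LinearIndepOn.add_notMem_span_image {R M ι : Type*} [Ring R] [CharZero R]
    [AddCommGroup M] [Module R M] {v : ι → M} {s t : Set ι} {a b : ι}
    (hs : LinearIndepOn R v s) (ha : a ∈ s) (hb : b ∈ s) (hts : t ⊆ s) (hat : a ∉ t) :
    v a + v b ∉ span R (v '' t) := by
  classical
  intro hmem
  obtain ⟨l, hlt, hl⟩ := (mem_span_image_iff_linearCombination R).mp hmem
  have hsupp : l - single a 1 - single b 1 ∈ supported R R s :=
    sub_mem (sub_mem (supported_mono hts hlt) (single_mem_supported R 1 ha))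
      (single_mem_supported R 1 hb)
  have hzero := linearIndepOn_iff.mp hs _ hsupp (by simp [hl])
  have hla : l a = 0 := notMem_support_iff.mp fun h => hat (hlt h)
  have hcoeff := DFunLike.congr_fun hzero a
  rcases eq_or_ne b a with rfl | hba
  · norm_num [hla] at hcoeff
  · simp [hla, single_eq_of_ne' hba] at hcoeff

namespace GKMGraph

open Submodule

variable {V : Type} {k : ℕ} {Γ : GKMGraph V k}

theorem IsValent.linearIndepOn_star {n : ℕ} (hval : Γ.IsValent n) (h : Γ.IsIndependent n)
    (v : V) : LinearIndepOn ℤ Γ.alpha (Γ.star v) := by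
  obtain ⟨hfin, hcard⟩ := hval v
  have hind := h v hfin.toFinset (by simp) (by rw [← hcard, Set.ncard_eq_toFinset_card _ hfin])
  rwa [← hfin.coe_toFinset]

theorem exists_alpha_sub_mem_span_of_reflTransGen {F : Set (V × V)} (hFE : F ⊆ Γ.E)
    {u v : V} (huv : Relation.ReflTransGen (fun a b => (a, b) ∈ F) u v)
    {e : V × V} (he : e ∈ Γ.star u) :
    ∃ e' ∈ Γ.star v, Γ.alpha e' - Γ.alpha e ∈ span ℤ (Γ.alpha '' F) := by
  induction huv with
  | refl => exact ⟨e, he, by simp⟩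
  | @tail b c _ hbc ih =>
    obtain ⟨e', he', hspan⟩ := ih
    obtain ⟨d, hd⟩ := Γ.congruence _ (hFE hbc) e' he'.1 he'.2
    refine ⟨Γ.nabla (b, c) e', (Γ.nabla_bijOn _ (hFE hbc)).mapsTo he', ?_⟩
    rw [hd, add_sub_right_comm]
    exact add_mem hspan (smul_mem _ _ (subset_span ⟨_, hbc, rfl⟩))

namespace IsFace

variable {W : Set V} {F : Set (V × V)}

theorem faceSpan_le_of_mem (hF : Γ.IsFace W F) {g : V × V} (hg : g ∈ F) :
    Γ.faceSpan F g.2 ≤ Γ.faceSpan F g.1 := by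
  rw [faceSpan, span_le]
  rintro x ⟨f, hf, rfl⟩
  have hgrev : (g.2, g.1) ∈ F := hF.rev_mem g hg
  obtain ⟨c, hc⟩ := Γ.congruence _ (hF.sub hgrev) f (hF.sub hf.1) hf.2
  have hnabla : Γ.nabla (g.2, g.1) f ∈ edgeStar F g.1 :=
    ⟨hF.invariant _ hgrev f hf.1 hf.2,
      ((Γ.nabla_bijOn _ (hF.sub hgrev)).mapsTo ⟨hF.sub hf.1, hf.2⟩).2⟩
  have hfα : Γ.alpha f = Γ.alpha (Γ.nabla (g.2, g.1) f) + c • Γ.alpha g := by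
    rw [hc, Γ.opposite g (hF.sub hg), smul_neg, neg_add_cancel_right]
  rw [hfα]
  exact add_mem (subset_span ⟨_, hnabla, rfl⟩)
    (smul_mem _ _ (subset_span ⟨g, ⟨hg, rfl⟩, rfl⟩))

theorem faceSpan_anti (hF : Γ.IsFace W F) {u v : V}
    (huv : Relation.ReflTransGen (fun a b => (a, b) ∈ F) u v) :
    Γ.faceSpan F v ≤ Γ.faceSpan F u := by
  induction huv with
  | refl => exact le_rfl
  | tail _ hbc ih => exact (hF.faceSpan_le_of_mem hbc).trans ih

theorem span_alpha_le_faceSpan (hF : Γ.IsFace W F) {v : V} (hv : v ∈ W) :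
    span ℤ (Γ.alpha '' F) ≤ Γ.faceSpan F v := by
  rw [span_le]
  rintro x ⟨g, hg, rfl⟩
  exact hF.faceSpan_anti (hF.connected v hv g.1 (hF.src_mem g hg))
    (subset_span ⟨g, ⟨hg, rfl⟩, rfl⟩)

end IsFace

end GKMGraph

theorem chordless_of_top_independent_general {V : Type} {k : ℕ}
    (Γ : GKMGraph V k) (n : ℕ) (hval : Γ.IsValent n) (h : Γ.IsIndependent n) :
    ∀ (W : Set V) (F : Set (V × V)), Γ.IsFace W F →
      ∀ e : V × V, ¬ Γ.IsChord W F e := by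
  rintro W F hF e ⟨⟨heE, heF, hu⟩, hw⟩
  obtain ⟨e', he', hspan⟩ :=
    Γ.exists_alpha_sub_mem_span_of_reflTransGen hF.sub (hF.connected e.1 hu e.2 hw) ⟨heE, rfl⟩
  have hrev : (e.2, e.1) ∈ Γ.star e.2 := ⟨Γ.rev_mem e heE, rfl⟩
  have hrev_notMem : (e.2, e.1) ∉ edgeStar F e.2 := fun hmem => heF (hF.rev_mem _ hmem.1)
  refine (hval.linearIndepOn_star h e.2).add_notMem_span_image hrev he'
    (fun x hx => ⟨hF.sub hx.1, hx.2⟩) hrev_notMem ?_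
  rw [Γ.opposite e heE, neg_add_eq_sub]
  exact hF.span_alpha_le_faceSpan hw hspan

/-- in an `n`-valent, `n`-independent GKM-graph with finitely
many vertices, every face is chordless. -/
theorem chordless_of_top_independent {V : Type} [Finite V] {k : ℕ}
    (Γ : GKMGraph V k) (n : ℕ) (hval : Γ.IsValent n) (h : Γ.IsIndependent n) :
    ∀ (W : Set V) (F : Set (V × V)), Γ.IsFace W F →
      ∀ e : V × V, ¬ Γ.IsChord W F e :=
  chordless_of_top_independent_general Γ n hval h
end

section
/- Let Γ be an (n,k)-type GKM-graph whose underlying graph has finitely many vertices. If Γ is (k+1)-complete and there exists a k-face Ξ of Γ such that every transversal edge to Ξ is a chord of Ξ, then Γ has no nontrivial extensions. -/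
open Submodule Module

theorem Module.finrank_le_ncard_of_smul_mem_span {R M : Type*} [CommRing R] [IsDomain R]
    [AddCommGroup M] [Module R M] [Module.Finite R M] {S T : Set M} (hS : S.Finite)
    (hT : span R T = ⊤) (h : ∀ t ∈ T, ∃ a : R, a ≠ 0 ∧ a • t ∈ span R S) :
    finrank R M ≤ S.ncard := by
  have htorsion : torsion R (M ⧸ span R S) = ⊤ := by
    rw [eq_top_iff, ← (span R S).range_mkQ, LinearMap.range_eq_map, ← hT, map_span, span_le]
    rintro _ ⟨t, ht, rfl⟩
    obtain ⟨a, ha, hat⟩ := h t ht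
    exact (mem_torsion_iff _).mpr
      ⟨⟨a, mem_nonZeroDivisors_of_ne_zero ha⟩, (Quotient.mk_eq_zero _).mpr hat⟩
  have hquot : finrank R (M ⧸ span R S) = 0 :=
    Module.IsTorsion.finrank_eq_zero fun {x} => (mem_torsion_iff x).mp (htorsion ▸ mem_top)
  have hspan : finrank R (span R S) ≤ S.ncard := by
    have := finrank_span_finset_le_card (R := R) hS.toFinset
    rwa [Set.finrank, Set.Finite.coe_toFinset, ← Set.ncard_eq_toFinset_card S hS] at this
  have := (span R S).finrank_quotient_add_finrank
  omega

namespace GKMGraph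

variable {V : Type} {m : ℕ} {Γ : GKMGraph V m} {W WT : Set V} {F FT : Set (V × V)}
  {u v : V} {g x e : V × V}

theorem sum_alpha_eq_zero_of_rev_mem {C : Finset (V × V)} (hC : ∀ x ∈ C, x ∈ Γ.E)
    (hrev : ∀ x ∈ C, (x.2, x.1) ∈ C) : ∑ x ∈ C, Γ.alpha x = 0 :=
  Finset.sum_involution (fun x _ => (x.2, x.1))
    (fun x hx => by rw [Γ.opposite x (hC x hx), add_neg_cancel])
    (fun x hx _ hfix => Γ.no_loops x (hC x hx) (congrArg Prod.fst hfix).symm)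
    hrev (fun _ _ => rfl)

theorem exists_smul_alpha_mem_of_rev_mem {N : Submodule ℤ (Fin m → ℤ)} {C : Finset (V × V)}
    (hC : ∀ x ∈ C, x ∈ Γ.E) (hrev : ∀ x ∈ C, (x.2, x.1) ∈ C) (heC : e ∈ C)
    (hcong : ∀ x ∈ C, Γ.alpha x - Γ.alpha e ∈ N) : ∃ a : ℤ, a ≠ 0 ∧ a • Γ.alpha e ∈ N := by
  refine ⟨C.card, by exact_mod_cast (Finset.card_pos.mpr ⟨e, heC⟩).ne', ?_⟩
  have hsum := sum_mem hcong
  rw [Finset.sum_sub_distrib, sum_alpha_eq_zero_of_rev_mem hC hrev, Finset.sum_const, zero_sub,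
    neg_mem_iff] at hsum
  exact_mod_cast hsum

theorem IsFace.nabla_bijOn (hF : Γ.IsFace W F) (hg : g ∈ F) :
    Set.BijOn (Γ.nabla g) (edgeStar F g.1) (edgeStar F g.2) := by
  have hbij := Γ.nabla_bijOn g (hF.sub hg)
  have hsub : ∀ w, edgeStar F w ⊆ edgeStar Γ.E w := fun w x hx => ⟨hF.sub hx.1, hx.2⟩
  have hmaps : Set.MapsTo (Γ.nabla g) (edgeStar F g.1) (edgeStar F g.2) := fun x hx =>
    ⟨hF.invariant g hg x hx.1 hx.2, (hbij.mapsTo (hsub _ hx)).2⟩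
  have hinj : Set.InjOn (Γ.nabla g) (edgeStar F g.1) := hbij.injOn.mono (hsub _)
  obtain ⟨r, hr⟩ := hF.regular
  obtain ⟨-, hcard₁⟩ := hr g.1 (hF.src_mem g hg)
  obtain ⟨hfin₂, hcard₂⟩ := hr g.2 (hF.tgt_mem g hg)
  have himage : Γ.nabla g '' edgeStar F g.1 = edgeStar F g.2 :=
    Set.eq_of_subset_of_ncard_le hmaps.image_subset
      (by rw [hinj.ncard_image, hcard₁, hcard₂]) hfin₂
  exact ⟨hmaps, hinj, himage.ge⟩

theorem IsFace.alpha_nabla_sub_mem_faceSpan (hF : Γ.IsFace W F) (hg : g ∈ F) (hx : x ∈ Γ.E)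
    (hxg : x.1 = g.1) : Γ.alpha (Γ.nabla g x) - Γ.alpha x ∈ Γ.faceSpan F g.1 := by
  obtain ⟨c, hc⟩ := Γ.congruence g (hF.sub hg) x hx hxg
  rw [hc, add_sub_cancel_left]
  exact smul_mem _ c (subset_span ⟨g, ⟨hg, rfl⟩, rfl⟩)

theorem IsFace.faceSpan_tgt_le (hF : Γ.IsFace W F) (hg : g ∈ F) :
    Γ.faceSpan F g.2 ≤ Γ.faceSpan F g.1 := by
  rw [faceSpan, span_le]
  rintro _ ⟨_, hx, rfl⟩
  obtain ⟨y, hy, rfl⟩ := (hF.nabla_bijOn hg).surjOn hx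
  simpa using add_mem (hF.alpha_nabla_sub_mem_faceSpan hg (hF.sub hy.1) hy.2)
    (subset_span ⟨y, hy, rfl⟩)

theorem IsFace.faceSpan_le (hF : Γ.IsFace W F) (hv : v ∈ W) (hu : u ∈ W) :
    Γ.faceSpan F u ≤ Γ.faceSpan F v := by
  induction hF.connected v hv u hu with
  | refl => exact le_rfl
  | tail _ hstep ih => exact (hF.faceSpan_tgt_le hstep).trans (ih (hF.src_mem _ hstep))

theorem IsFace.subset_of_edgeStar_subset (hF : Γ.IsFace W F) (hT : Γ.IsFace WT FT)
    (hv : v ∈ W) (hsub : edgeStar F v ⊆ FT) : F ⊆ FT := by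
  have hstar : ∀ u ∈ W, edgeStar F u ⊆ FT := by
    intro u hu
    induction hF.connected v hv u hu with
    | refl => exact hsub
    | @tail b u _ hstep ih =>
      intro x hx
      have hb := ih (hF.src_mem _ hstep)
      obtain ⟨y, hy, rfl⟩ := (hF.nabla_bijOn hstep).surjOn hx
      exact hT.invariant _ (hb ⟨hstep, rfl⟩) y (hb hy) hy.2
  exact fun x hx => hstar x.1 (hF.src_mem x hx) ⟨hx, rfl⟩

theorem IsFace.exists_nabla_eq_of_notMem (hF : Γ.IsFace W F) (hT : Γ.IsFace WT FT)
    (hFT : F ⊆ FT) (hg : g ∈ F) (hx : x ∈ edgeStar FT g.2) (hxF : x ∉ F) :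
    ∃ y ∈ edgeStar FT g.1, y ∉ F ∧ Γ.nabla g y = x := by
  obtain ⟨y, hy, rfl⟩ := (hT.nabla_bijOn (hFT hg)).surjOn hx
  exact ⟨y, hy, fun hyF => hxF (hF.invariant g hg y hyF hy.2), rfl⟩

theorem IsFace.exists_alpha_sub_mem_faceSpan (hF : Γ.IsFace W F) (hT : Γ.IsFace WT FT)
    (hFT : F ⊆ FT) (hv : v ∈ W) (hu : u ∈ W) (hx : x ∈ edgeStar FT u) (hxF : x ∉ F) :
    ∃ y ∈ edgeStar FT v, y ∉ F ∧ Γ.alpha x - Γ.alpha y ∈ Γ.faceSpan F v := by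
  induction hF.connected v hv u hu generalizing x with
  | refl => exact ⟨x, hx, hxF, by simp⟩
  | @tail b u _ hstep ih =>
    obtain ⟨y, hy, hyF, rfl⟩ := hF.exists_nabla_eq_of_notMem hT hFT hstep hx hxF
    obtain ⟨z, hz, hzF, hyz⟩ := ih (hF.src_mem _ hstep) hy hyF
    have hstep_mem : Γ.alpha (Γ.nabla (b, u) y) - Γ.alpha y ∈ Γ.faceSpan F v :=
      hF.faceSpan_le hv (hF.src_mem _ hstep)
        (hF.alpha_nabla_sub_mem_faceSpan hstep (hT.sub hy.1) hy.2)
    exact ⟨z, hz, hzF, by simpa using add_mem hstep_mem hyz⟩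

theorem IsComplete.exists_isNFace_edgeStar_eq_insert {r : ℕ} (hcomp : Γ.IsComplete (r + 1))
    (hF : Γ.IsNFace W F r) (hv : v ∈ W) (he : e ∈ Γ.star v) (heF : e ∉ F) :
    ∃ WT FT, Γ.IsNFace WT FT (r + 1) ∧ edgeStar FT v = insert e (edgeStar F v) := by
  classical
  obtain ⟨hfin, hcard⟩ := hF.2 v hv
  have hstar_sub : ↑(insert e hfin.toFinset) ⊆ Γ.star v := by
    intro x hx
    rcases Finset.mem_insert.mp hx with rfl | hx
    · exact he
    · exact ⟨hF.1.sub ((hfin.mem_toFinset.mp hx).1), (hfin.mem_toFinset.mp hx).2⟩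
  have hstar_card : (insert e hfin.toFinset).card = r + 1 := by
    rw [Finset.card_insert_of_notMem (fun h => heF (hfin.mem_toFinset.mp h).1),
      ← Set.ncard_eq_toFinset_card _ hfin, hcard]
  obtain ⟨WT, FT, hT, -, hstarT⟩ := hcomp v (r + 1) le_rfl _ hstar_sub hstar_card
  exact ⟨WT, FT, hT, by simpa using hstarT⟩

theorem exists_smul_alpha_mem_faceSpan [Finite V] {r : ℕ} (hcomp : Γ.IsComplete (r + 1))
    (hF : Γ.IsNFace W F r) (hch : ∀ e : V × V, Γ.IsTransversal W F e → Γ.IsChord W F e)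
    (hv : v ∈ W) (he : e ∈ Γ.star v) (heF : e ∉ F) :
    ∃ a : ℤ, a ≠ 0 ∧ a • Γ.alpha e ∈ Γ.faceSpan F v := by
  obtain ⟨WT, FT, hT, hstarT⟩ := hcomp.exists_isNFace_edgeStar_eq_insert hF hv he heF
  have hFT : F ⊆ FT := hF.1.subset_of_edgeStar_subset hT.1 hv fun x hx =>
    (show x ∈ edgeStar FT v by simp [hstarT, hx]).1
  have he_unique : ∀ y ∈ edgeStar FT v, y ∉ F → y = e := by
    intro y hy hyF
    rw [hstarT] at hy
    simpa [edgeStar, hyF] using hy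
  let C := (Set.toFinite {x ∈ FT | x ∉ F ∧ x.1 ∈ W}).toFinset
  have hC_mem : ∀ {x}, x ∈ C ↔ x ∈ FT ∧ x ∉ F ∧ x.1 ∈ W := Set.Finite.mem_toFinset _
  refine exists_smul_alpha_mem_of_rev_mem (C := C) (fun x hx => hT.1.sub (hC_mem.mp hx).1)
    ?_ (hC_mem.mpr ⟨(show e ∈ edgeStar FT v by simp [hstarT]).1, heF, he.2 ▸ hv⟩) ?_
  · intro x hx
    obtain ⟨hxT, hxF, hxW⟩ := hC_mem.mp hx
    have hchord := hch x ⟨hT.1.sub hxT, hxF, hxW⟩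
    exact hC_mem.mpr ⟨hT.1.rev_mem x hxT, fun h => hxF (hF.1.rev_mem _ h), hchord.2⟩
  · intro x hx
    obtain ⟨hxT, hxF, hxW⟩ := hC_mem.mp hx
    obtain ⟨y, hy, hyF, hxy⟩ :=
      hF.1.exists_alpha_sub_mem_faceSpan hT.1 hFT hv hxW ⟨hxT, rfl⟩ hxF
    rwa [he_unique y hy hyF] at hxy

theorem le_of_isComplete_of_chord_face [Finite V] {r : ℕ} (hcomp : Γ.IsComplete (r + 1))
    (hF : Γ.IsNFace W F r) (hch : ∀ e : V × V, Γ.IsTransversal W F e → Γ.IsChord W F e) :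
    m ≤ r := by
  obtain ⟨v, hv⟩ := hF.1.nonempty
  obtain ⟨hfin, hcard⟩ := hF.2 v hv
  have hrank := finrank_le_ncard_of_smul_mem_span (hfin.image Γ.alpha) (Γ.rank v) ?_
  · rw [finrank_fin_fun] at hrank
    exact hrank.trans ((Set.ncard_image_le hfin).trans hcard.le)
  · rintro _ ⟨e, he, rfl⟩
    by_cases heF : e ∈ F
    · have heΞ : e ∈ edgeStar F v := ⟨heF, he.2⟩
      exact ⟨1, one_ne_zero, by simpa using subset_span (Set.mem_image_of_mem Γ.alpha heΞ)⟩
    · exact exists_smul_alpha_mem_faceSpan hcomp hF hch hv he heF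

def SameConnection {k k' : ℕ} (Γ' : GKMGraph V k') (Γ : GKMGraph V k) : Prop :=
  Γ'.E = Γ.E ∧ ∀ e ∈ Γ.E, ∀ e' ∈ Γ.E, e'.1 = e.1 → Γ'.nabla e e' = Γ.nabla e e'

namespace SameConnection

variable {k k' : ℕ} {Γ : GKMGraph V k} {Γ' : GKMGraph V k'}

theorem isFace (h : Γ'.SameConnection Γ) (hF : Γ.IsFace W F) : Γ'.IsFace W F where
  nonempty := hF.nonempty
  sub := h.1 ▸ hF.sub
  src_mem := hF.src_mem
  tgt_mem := hF.tgt_mem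
  rev_mem := hF.rev_mem
  connected := hF.connected
  invariant e he e' he' hee' :=
    h.2 e (hF.sub he) e' (hF.sub he') hee' ▸ hF.invariant e he e' he' hee'
  regular := hF.regular

theorem isNFace (h : Γ'.SameConnection Γ) {r : ℕ} (hF : Γ.IsNFace W F r) :
    Γ'.IsNFace W F r :=
  ⟨h.isFace hF.1, hF.2⟩

theorem isComplete (h : Γ'.SameConnection Γ) {j : ℕ} (hcomp : Γ.IsComplete j) :
    Γ'.IsComplete j := by
  intro v i hi s hs hcard
  obtain ⟨W, F, hF, hvW, hstar⟩ := hcomp v i hi s (by rwa [star, ← h.1]) hcard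
  exact ⟨W, F, h.isNFace hF, hvW, hstar⟩

theorem isChord_iff (h : Γ'.SameConnection Γ) :
    Γ'.IsChord W F e ↔ Γ.IsChord W F e := by
  simp only [IsChord, IsTransversal, h.1]

theorem isTransversal_iff (h : Γ'.SameConnection Γ) :
    Γ'.IsTransversal W F e ↔ Γ.IsTransversal W F e := by
  simp only [IsTransversal, h.1]

end SameConnection

end GKMGraph

theorem no_nontrivial_extensions_of_chord_face_general {V : Type} [Finite V] {n k : ℕ}
    (Γ : GKMGraph V k) (hcomp : Γ.IsComplete (k + 1))
    (W : Set V) (F : Set (V × V)) (hF : Γ.IsNFace W F k)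
    (hch : ∀ e : V × V, Γ.IsTransversal W F e → Γ.IsChord W F e) :
    ∀ s : ℕ, 0 < s → ¬ ∃ Γ' : GKMGraph V (k + s),
      Γ'.IsValent n ∧ Γ'.IsExtension Γ := by
  rintro s hs ⟨Γ', -, hE, hnabla, -⟩
  have h : Γ'.SameConnection Γ := ⟨hE, hnabla⟩
  have hle : k + s ≤ k :=
    GKMGraph.le_of_isComplete_of_chord_face (h.isComplete hcomp) (h.isNFace hF)
      fun e he => h.isChord_iff.mpr (hch e (h.isTransversal_iff.mp he))
  omega

/-- an `(n,k)`-type GKM-graph with finitely many vertices which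
is `(k+1)`-complete and possesses a `k`-face all of whose transversal edges
are chords has no nontrivial extensions. -/
theorem no_nontrivial_extensions_of_chord_face {V : Type} [Finite V] {n k : ℕ}
    (Γ : GKMGraph V k) (hval : Γ.IsValent n) (hcomp : Γ.IsComplete (k + 1))
    (W : Set V) (F : Set (V × V)) (hF : Γ.IsNFace W F k)
    (hch : ∀ e : V × V, Γ.IsTransversal W F e → Γ.IsChord W F e) :
    ∀ s : ℕ, 0 < s → ¬ ∃ Γ' : GKMGraph V (k + s),
      Γ'.IsValent n ∧ Γ'.IsExtension Γ :=
  no_nontrivial_extensions_of_chord_face_general Γ hcomp W F hF hch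
end

section
/- Let Γ be a GKM-graph and let Ξ_1 and Ξ_2 be faces of Γ having a common vertex v such that star_{Ξ_1}(v) = star_{Ξ_2}(v). Then Ξ_1 = Ξ_2, i.e. V_{Ξ_1} = V_{Ξ_2} and E_{Ξ_1} = E_{Ξ_2}. (A face of a GKM-graph is uniquely determined by its star at any of its vertices.) -/
/-! The connection along an edge `e` of a face maps the star of the face at `i(e)` into its
star at `t(e)`; being injective between stars of the same finite size, it maps one onto the
other. Hence the star of a face at one vertex determines its stars at all neighbours and, by
connectedness, the whole face. -/

theorem mem_of_edgeStar_fst_eq {V : Type} {F₁ F₂ : Set (V × V)} {e : V × V}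
    (hstar : edgeStar F₁ e.1 = edgeStar F₂ e.1) (he : e ∈ F₁) : e ∈ F₂ :=
  (hstar.subset (show e ∈ edgeStar F₁ e.1 from ⟨he, rfl⟩)).1

namespace GKMGraph.IsFace

variable {V : Type} {k : ℕ} {Γ : GKMGraph V k} {W W₁ W₂ : Set V} {F F₁ F₂ : Set (V × V)}

theorem edgeStar_snd_eq_image (h : Γ.IsFace W F) {e : V × V} (he : e ∈ F) :
    edgeStar F e.2 = Γ.nabla e '' edgeStar F e.1 := by
  have hbij := Γ.nabla_bijOn e (h.sub he)
  have hsub : edgeStar F e.1 ⊆ edgeStar Γ.E e.1 := fun x hx => ⟨h.sub hx.1, hx.2⟩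
  have hmaps : Γ.nabla e '' edgeStar F e.1 ⊆ edgeStar F e.2 := by
    rintro _ ⟨e', he', rfl⟩
    exact ⟨h.invariant e he e' he'.1 he'.2, (hbij.mapsTo (hsub he')).2⟩
  obtain ⟨r, hr⟩ := h.regular
  obtain ⟨-, hcard₁⟩ := hr e.1 (h.src_mem e he)
  obtain ⟨hfin₂, hcard₂⟩ := hr e.2 (h.tgt_mem e he)
  have hcard : (Γ.nabla e '' edgeStar F e.1).ncard = r := by
    rw [(hbij.injOn.mono hsub).ncard_image, hcard₁]
  exact (Set.eq_of_subset_of_ncard_le hmaps (by rw [hcard, hcard₂]) hfin₂).symm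

theorem mem_and_edgeStar_eq_of_edgeStar_eq (h₁ : Γ.IsFace W₁ F₁) (h₂ : Γ.IsFace W₂ F₂)
    {v : V} (hv₁ : v ∈ W₁) (hv₂ : v ∈ W₂) (hstar : edgeStar F₁ v = edgeStar F₂ v)
    {u : V} (hu : u ∈ W₁) : u ∈ W₂ ∧ edgeStar F₁ u = edgeStar F₂ u := by
  induction h₁.connected v hv₁ u hu with
  | refl => exact ⟨hv₂, hstar⟩
  | @tail b c _ hbc ih =>
    obtain ⟨-, hstar_b⟩ := ih (h₁.src_mem (b, c) hbc)
    have hbc₂ : (b, c) ∈ F₂ := mem_of_edgeStar_fst_eq hstar_b hbc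
    refine ⟨h₂.tgt_mem (b, c) hbc₂, ?_⟩
    rw [h₁.edgeStar_snd_eq_image hbc, h₂.edgeStar_snd_eq_image hbc₂, hstar_b]

theorem subset_of_edgeStar_eq (h₁ : Γ.IsFace W₁ F₁) (h₂ : Γ.IsFace W₂ F₂)
    {v : V} (hv₁ : v ∈ W₁) (hv₂ : v ∈ W₂) (hstar : edgeStar F₁ v = edgeStar F₂ v) :
    W₁ ⊆ W₂ ∧ F₁ ⊆ F₂ := by
  have hstars {u : V} (hu : u ∈ W₁) := mem_and_edgeStar_eq_of_edgeStar_eq h₁ h₂ hv₁ hv₂ hstar hu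
  exact ⟨fun u hu => (hstars hu).1,
    fun e he => mem_of_edgeStar_fst_eq (hstars (h₁.src_mem e he)).2 he⟩

end GKMGraph.IsFace

/-- a face of a GKM-graph is uniquely determined by its star at
any of its vertices. -/
theorem face_eq_of_star_eq {V : Type} {k : ℕ} (Γ : GKMGraph V k)
    (W₁ W₂ : Set V) (F₁ F₂ : Set (V × V))
    (h₁ : Γ.IsFace W₁ F₁) (h₂ : Γ.IsFace W₂ F₂)
    (v : V) (hv₁ : v ∈ W₁) (hv₂ : v ∈ W₂)
    (hstar : edgeStar F₁ v = edgeStar F₂ v) :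
    W₁ = W₂ ∧ F₁ = F₂ := by
  obtain ⟨hW₁₂, hF₁₂⟩ := h₁.subset_of_edgeStar_eq h₂ hv₁ hv₂ hstar
  obtain ⟨hW₂₁, hF₂₁⟩ := h₂.subset_of_edgeStar_eq h₁ hv₂ hv₁ hstar.symm
  exact ⟨hW₁₂.antisymm hW₂₁, hF₁₂.antisymm hF₂₁⟩
end

section
/- Let j ≥ 1 and let Γ be a j-complete GKM-graph, and let Ξ be a j-face of Γ. Consider the set S of all faces of Γ contained in Ξ, partially ordered by reverse inclusion (so Ξ is the least element of S). Then S is a simplicial poset of dimension j: for every face Ω ∈ S, the interval [Ξ, Ω] in S is order-isomorphic to the Boolean lattice of all subsets of a set with j − dim Ω elements. In particular, the length of Ω in S equals j − dim Ω, and for each i the number of elements of S of length i + 1 equals the number of (j − i − 1)-dimensional faces of Γ contained in Ξ. -/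
/-- The poset of faces of the GKM-graph `Γ` contained in the face `(W, F)`,
ordered by *reverse* inclusion (so `(W, F)` itself is the least element). -/
def GKMGraph.FacesIn {V : Type} {k : ℕ} (Γ : GKMGraph V k)
    (W : Set V) (F : Set (V × V)) : Type :=
  {x : Set V × Set (V × V) // Γ.IsFace x.1 x.2 ∧ x.1 ⊆ W ∧ x.2 ⊆ F}

noncomputable instance {V : Type} {k : ℕ} (Γ : GKMGraph V k)
    (W : Set V) (F : Set (V × V)) : PartialOrder (Γ.FacesIn W F) where
  le a b := b.1.1 ⊆ a.1.1 ∧ b.1.2 ⊆ a.1.2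
  le_refl a := ⟨subset_rfl, subset_rfl⟩
  le_trans a b c h₁ h₂ := ⟨h₂.1.trans h₁.1, h₂.2.trans h₁.2⟩
  le_antisymm a b h₁ h₂ := by
    apply Subtype.ext
    apply Prod.ext
    · exact subset_antisymm h₂.1 h₁.1
    · exact subset_antisymm h₂.2 h₁.2

section Helpers

variable {V : Type} {k : ℕ} {Γ : GKMGraph V k}

/-- Transport along an edge of an `r`-face maps the star of the face at the
initial vertex onto the star at the terminal vertex. -/
lemma GKMGraph.IsNFace.transport_star {W : Set V} {F : Set (V × V)} {r : ℕ}
    (h : Γ.IsNFace W F r) {e : V × V} (he : e ∈ F) :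
    Γ.nabla e '' edgeStar F e.1 = edgeStar F e.2 := by
  obtain ⟨hf, hreg⟩ := h
  have heE : e ∈ Γ.E := hf.sub he
  have hsub : Γ.nabla e '' edgeStar F e.1 ⊆ edgeStar F e.2 := by
    rintro _ ⟨e', he', rfl⟩
    refine ⟨hf.invariant e he e' he'.1 he'.2, ?_⟩
    exact ((Γ.nabla_bijOn e heE).mapsTo ⟨hf.sub he'.1, he'.2⟩).2
  have hFE : edgeStar F e.1 ⊆ edgeStar Γ.E e.1 := fun x hx => ⟨hf.sub hx.1, hx.2⟩
  have hinj : Set.InjOn (Γ.nabla e) (edgeStar F e.1) :=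
    (Γ.nabla_bijOn e heE).injOn.mono hFE
  have h1 := hreg e.1 (hf.src_mem e he)
  have h2 := hreg e.2 (hf.tgt_mem e he)
  refine Set.eq_of_subset_of_ncard_le hsub ?_ h2.1
  rw [Set.ncard_image_of_injOn hinj, h1.2, h2.2]

/-- Monotonicity/rigidity: if the star of a face `(W₁,F₁)` at a common vertex
`v` is contained in the star of another face `(W₂,F₂)`, then the whole face is
contained in the other one. -/
lemma GKMGraph.nface_mono {W₁ W₂ : Set V} {F₁ F₂ : Set (V × V)} {r₁ r₂ : ℕ} {v : V}
    (h₁ : Γ.IsNFace W₁ F₁ r₁) (h₂ : Γ.IsNFace W₂ F₂ r₂)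
    (hv₁ : v ∈ W₁) (hv₂ : v ∈ W₂) (hs : edgeStar F₁ v ⊆ edgeStar F₂ v) :
    W₁ ⊆ W₂ ∧ F₁ ⊆ F₂ := by
  have key : ∀ u : V, Relation.ReflTransGen (fun a b => (a, b) ∈ F₁) v u →
      u ∈ W₂ ∧ edgeStar F₁ u ⊆ edgeStar F₂ u := by
    intro u h
    induction h with
    | refl => exact ⟨hv₂, hs⟩
    | @tail b c _ hbc ih =>
      have hbc2 : (b, c) ∈ F₂ := (ih.2 ⟨hbc, rfl⟩).1
      refine ⟨h₂.1.tgt_mem _ hbc2, ?_⟩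
      have t1 := h₁.transport_star hbc
      have t2 := h₂.transport_star hbc2
      calc edgeStar F₁ c = Γ.nabla (b, c) '' edgeStar F₁ b := t1.symm
        _ ⊆ Γ.nabla (b, c) '' edgeStar F₂ b := Set.image_mono ih.2
        _ = edgeStar F₂ c := t2
  constructor
  · intro u hu
    exact (key u (h₁.1.connected v hv₁ u hu)).1
  · intro e he
    exact ((key e.1 (h₁.1.connected v hv₁ e.1 (h₁.1.src_mem e he))).2 ⟨he, rfl⟩).1

lemma GKMGraph.nface_eq {W₁ W₂ : Set V} {F₁ F₂ : Set (V × V)} {r₁ r₂ : ℕ} {v : V}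
    (h₁ : Γ.IsNFace W₁ F₁ r₁) (h₂ : Γ.IsNFace W₂ F₂ r₂)
    (hv₁ : v ∈ W₁) (hv₂ : v ∈ W₂) (hs : edgeStar F₁ v = edgeStar F₂ v) :
    W₁ = W₂ ∧ F₁ = F₂ := by
  obtain ⟨a1, a2⟩ := Γ.nface_mono h₁ h₂ hv₁ hv₂ hs.subset
  obtain ⟨b1, b2⟩ := Γ.nface_mono h₂ h₁ hv₂ hv₁ hs.symm.subset
  exact ⟨subset_antisymm a1 b1, subset_antisymm a2 b2⟩

/-- Existence: inside a `j`-face `(W,F)` of a `j`-complete GKM-graph, any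
subset `S` of the star at `v ∈ W` is the star of a face contained in `(W,F)`. -/
lemma GKMGraph.exists_nface_in {W : Set V} {F : Set (V × V)} {j : ℕ}
    (hΞ : Γ.IsNFace W F j) (hcomp : Γ.IsComplete j) {v : V} (hv : v ∈ W)
    {S : Set (V × V)} (hS : S ⊆ edgeStar F v) :
    ∃ W' F', Γ.IsNFace W' F' S.ncard ∧ v ∈ W' ∧ edgeStar F' v = S ∧
      W' ⊆ W ∧ F' ⊆ F := by
  have hfinΞ : (edgeStar F v).Finite := (hΞ.2 v hv).1
  have hfin : S.Finite := hfinΞ.subset hS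
  have hstarsub : edgeStar F v ⊆ Γ.star v := fun e he => ⟨hΞ.1.sub he.1, he.2⟩
  have hsub : ↑hfin.toFinset ⊆ Γ.star v := by
    rw [Set.Finite.coe_toFinset]; exact hS.trans hstarsub
  have hcard : hfin.toFinset.card = S.ncard := (Set.ncard_eq_toFinset_card S hfin).symm
  have hle : S.ncard ≤ j := by
    rw [← (hΞ.2 v hv).2]; exact Set.ncard_le_ncard hS hfinΞ
  obtain ⟨W', F', hN, hvW', hstar⟩ := hcomp v S.ncard hle hfin.toFinset hsub hcard
  rw [Set.Finite.coe_toFinset] at hstar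
  have hmono := Γ.nface_mono hN hΞ hvW' hv (by rw [hstar]; exact hS)
  exact ⟨W', F', hN, hvW', hstar, hmono.1, hmono.2⟩

lemma GKMGraph.facesIn_le_def {W : Set V} {F : Set (V × V)} (a b : Γ.FacesIn W F) :
    a ≤ b ↔ b.1.1 ⊆ a.1.1 ∧ b.1.2 ⊆ a.1.2 := Iff.rfl

/-- Part (a): the interval below an `r`-face in the face poset of a `j`-face
is a Boolean lattice on `j - r` elements. -/
lemma GKMGraph.facesIn_partA {W : Set V} {F : Set (V × V)} {j : ℕ}
    (hΞ : Γ.IsNFace W F j) (hcomp : Γ.IsComplete j)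
    (Ω : Γ.FacesIn W F) (r : ℕ) (hΩ : Γ.IsNFace Ω.1.1 Ω.1.2 r) :
    ∃ φ : {Φ : Γ.FacesIn W F // Φ ≤ Ω} ≃ Finset (Fin (j - r)),
      ∀ A B : {Φ : Γ.FacesIn W F // Φ ≤ Ω}, A.1 ≤ B.1 ↔ φ A ⊆ φ B := by
  classical
  obtain ⟨v, hv⟩ := hΩ.1.nonempty
  have hvW : v ∈ W := Ω.2.2.1 hv
  set SΞ := edgeStar F v with hSXdef
  set SΩ := edgeStar Ω.1.2 v with hSOdef
  have hΩΞ : SΩ ⊆ SΞ := fun e he => ⟨Ω.2.2.2 he.1, he.2⟩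
  have hfinΞ : SΞ.Finite := (hΞ.2 v hvW).1
  have hcardΞ : SΞ.ncard = j := (hΞ.2 v hvW).2
  have hcardΩ : SΩ.ncard = r := (hΩ.2 v hv).2
  set D := SΞ \ SΩ with hDdef
  have hfinD : D.Finite := hfinΞ.diff
  have hcardD : D.ncard = j - r := by
    rw [hDdef, Set.ncard_diff hΩΞ (hfinΞ.subset hΩΞ), hcardΞ, hcardΩ]
  haveI : Fintype D := hfinD.fintype
  have hcard' : Fintype.card D = j - r := by
    rw [← Nat.card_eq_fintype_card, Nat.card_coe_set_eq, hcardD]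
  have g : D ≃ Fin (j - r) := Fintype.equivFinOfCardEq hcard'
  have hstar_sub : ∀ A : {Φ : Γ.FacesIn W F // Φ ≤ Ω},
      edgeStar A.1.1.2 v ⊆ SΞ := fun A e he => ⟨A.1.2.2.2 he.1, he.2⟩
  have hΩ_sub : ∀ A : {Φ : Γ.FacesIn W F // Φ ≤ Ω},
      SΩ ⊆ edgeStar A.1.1.2 v := by
    intro A e he
    exact ⟨((Γ.facesIn_le_def A.1 Ω).mp A.2).2 he.1, he.2⟩
  have hvA : ∀ A : {Φ : Γ.FacesIn W F // Φ ≤ Ω}, v ∈ A.1.1.1 := by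
    intro A
    exact ((Γ.facesIn_le_def A.1 Ω).mp A.2).1 hv
  have mono : ∀ A B : {Φ : Γ.FacesIn W F // Φ ≤ Ω},
      edgeStar A.1.1.2 v ⊆ edgeStar B.1.1.2 v → B.1 ≤ A.1 := by
    intro A B hAB
    obtain ⟨rA, hA⟩ := A.1.2.1.regular
    obtain ⟨rB, hB⟩ := B.1.2.1.regular
    have h := Γ.nface_mono ⟨A.1.2.1, hA⟩ ⟨B.1.2.1, hB⟩ (hvA A) (hvA B) hAB
    exact (Γ.facesIn_le_def _ _).mpr ⟨h.1, h.2⟩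
  set f : {Φ : Γ.FacesIn W F // Φ ≤ Ω} → Finset (Fin (j - r)) :=
    fun A => Finset.univ.filter (fun a => (g.symm a : V × V) ∉ A.1.1.2) with hfdef
  have hmemf : ∀ A a, a ∈ f A ↔ (g.symm a : V × V) ∉ A.1.1.2 := by
    intro A a; simp [hfdef]
  have hiff : ∀ A B, A.1 ≤ B.1 ↔ f A ⊆ f B := by
    intro A B
    constructor
    · intro h a ha
      rw [hmemf] at ha ⊢
      exact fun hmem => ha (((Γ.facesIn_le_def _ _).mp h).2 hmem)
    · intro h
      apply mono B A
      intro x hx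
      by_cases hxΩ : x ∈ SΩ
      · exact hΩ_sub A hxΩ
      · have hxD : x ∈ D := ⟨hstar_sub B hx, hxΩ⟩
        by_contra hxA
        have hxA' : x ∉ A.1.1.2 := fun hmem => hxA ⟨hmem, hx.2⟩
        have h1 : g ⟨x, hxD⟩ ∈ f A := by
          rw [hmemf, Equiv.symm_apply_apply]; exact hxA'
        have h2 := h h1
        rw [hmemf, Equiv.symm_apply_apply] at h2
        exact h2 hx.1
  have hinj : Function.Injective f := by
    intro A B hAB
    exact Subtype.ext (le_antisymm ((hiff A B).mpr (le_of_eq hAB))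
      ((hiff B A).mpr (le_of_eq hAB.symm)))
  have hsurj : Function.Surjective f := by
    intro s
    set S : Set (V × V) :=
      SΩ ∪ (fun a : Fin (j - r) => (g.symm a : V × V)) '' {a | a ∉ s} with hSdef
    have hSsub : S ⊆ edgeStar F v := by
      rintro x (hx | ⟨a, _, rfl⟩)
      · exact hΩΞ hx
      · exact (g.symm a).2.1
    obtain ⟨W', F', hN, hvW', hstar, hW'W, hF'F⟩ :=
      Γ.exists_nface_in hΞ hcomp hvW hSsub
    set Θ : Γ.FacesIn W F := ⟨(W', F'), hN.1, hW'W, hF'F⟩ with hTdef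
    have hΘΩ : Θ ≤ Ω := by
      have h := Γ.nface_mono hΩ hN hv hvW'
        (by rw [hstar]; exact Set.subset_union_left)
      exact (Γ.facesIn_le_def _ _).mpr ⟨h.1, h.2⟩
    refine ⟨⟨Θ, hΘΩ⟩, ?_⟩
    ext a
    rw [hmemf]
    set x : V × V := (g.symm a : V × V) with hxdef
    have hxD : x ∈ D := (g.symm a).2
    have hx1 : x ∈ F' ↔ x ∈ S := by
      constructor
      · intro h; rw [← hstar]; exact ⟨h, hxD.1.2⟩
      · intro h; rw [← hstar] at h; exact h.1
    have hxS : x ∈ S ↔ a ∉ s := by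
      constructor
      · rintro (h | ⟨b, hb, hba⟩)
        · exact absurd h hxD.2
        · have hb' : b = a := g.symm.injective (Subtype.coe_injective hba)
          exact hb' ▸ hb
      · intro h; exact Or.inr ⟨a, h, rfl⟩
    constructor
    · intro h; by_contra ha; exact h (hx1.mpr (hxS.mpr ha))
    · intro ha h; exact (hxS.mp (hx1.mp h)) ha
  exact ⟨Equiv.ofBijective f ⟨hinj, hsurj⟩, hiff⟩

/-- Part (b): the height of an `r`-face in the face poset of a `j`-face is
`j - r`. -/
lemma GKMGraph.facesIn_partB {W : Set V} {F : Set (V × V)} {j : ℕ}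
    (hΞ : Γ.IsNFace W F j) (hcomp : Γ.IsComplete j)
    (Ω : Γ.FacesIn W F) (r : ℕ) (hΩ : Γ.IsNFace Ω.1.1 Ω.1.2 r) :
    Order.height Ω = (j - r : ℕ) := by
  classical
  obtain ⟨v, hv⟩ := hΩ.1.nonempty
  have hvW : v ∈ W := Ω.2.2.1 hv
  set SΞ := edgeStar F v with hSXdef
  set SΩ := edgeStar Ω.1.2 v with hSOdef
  have hΩΞ : SΩ ⊆ SΞ := fun e he => ⟨Ω.2.2.2 he.1, he.2⟩
  have hfinΞ : SΞ.Finite := (hΞ.2 v hvW).1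
  have hcardΞ : SΞ.ncard = j := (hΞ.2 v hvW).2
  have hcardΩ : SΩ.ncard = r := (hΩ.2 v hv).2
  set D := SΞ \ SΩ with hDdef
  have hfinD : D.Finite := hfinΞ.diff
  have hcardD : D.ncard = j - r := by
    rw [hDdef, Set.ncard_diff hΩΞ (hfinΞ.subset hΩΞ), hcardΞ, hcardΩ]
  haveI : Fintype D := hfinD.fintype
  have hcard' : Fintype.card D = j - r := by
    rw [← Nat.card_eq_fintype_card, Nat.card_coe_set_eq, hcardD]
  have g : D ≃ Fin (j - r) := Fintype.equivFinOfCardEq hcard'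
  apply le_antisymm
  · apply Order.height_le
    intro p hlast
    have hpΩ : ∀ i, p i ≤ Ω := fun i => hlast ▸ p.monotone (Fin.le_last i)
    have hvp : ∀ i, v ∈ (p i).1.1 := fun i =>
      ((Γ.facesIn_le_def _ _).mp (hpΩ i)).1 hv
    have hsubp : ∀ i, edgeStar (p i).1.2 v ⊆ SΞ := fun i e he =>
      ⟨(p i).2.2.2 he.1, he.2⟩
    set c : Fin (p.length + 1) → ℕ := fun i => (edgeStar (p i).1.2 v).ncard
      with hcdef
    have hstrict : ∀ i1 i2 : Fin (p.length + 1), i1 < i2 → c i2 < c i1 := by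
      intro i1 i2 h
      have hlt := p.strictMono h
      have hle := (Γ.facesIn_le_def _ _).mp hlt.le
      have hsub : edgeStar (p i2).1.2 v ⊆ edgeStar (p i1).1.2 v :=
        fun e he => ⟨hle.2 he.1, he.2⟩
      have hfin1 : (edgeStar (p i1).1.2 v).Finite := hfinΞ.subset (hsubp i1)
      refine lt_of_le_of_ne (Set.ncard_le_ncard hsub hfin1) ?_
      intro hEq
      have hseq : edgeStar (p i2).1.2 v = edgeStar (p i1).1.2 v :=
        Set.eq_of_subset_of_ncard_le hsub hEq.ge hfin1
      obtain ⟨r1, h1⟩ := (p i1).2.1.regular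
      obtain ⟨r2, h2⟩ := (p i2).2.1.regular
      have heqf := Γ.nface_eq ⟨(p i2).2.1, h2⟩ ⟨(p i1).2.1, h1⟩
        (hvp i2) (hvp i1) hseq
      exact hlt.ne (Subtype.ext (Prod.ext heqf.1 heqf.2)).symm
    have hclast : c (Fin.last _) = r := by
      show (edgeStar (p (Fin.last _)).1.2 v).ncard = r
      rw [show p (Fin.last _) = Ω from hlast]
      exact hcardΩ
    have hchain : ∀ m : ℕ, (hm : m ≤ p.length) →
        m + r ≤ c ⟨p.length - m, by omega⟩ := by
      intro m
      induction m with
      | zero =>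
        intro _
        have he : c ⟨p.length - 0, by omega⟩ = r := hclast
        omega
      | succ m ih =>
        intro hm1
        have hm : m ≤ p.length := by omega
        have h1 := ih hm
        have hltidx : (⟨p.length - (m + 1), by omega⟩ : Fin (p.length + 1)) <
            ⟨p.length - m, by omega⟩ := by
          rw [Fin.mk_lt_mk]; omega
        have h2 := hstrict _ _ hltidx
        omega
    have hfinal := hchain p.length le_rfl
    have hc0 : c ⟨p.length - p.length, by omega⟩ ≤ j := by
      rw [← hcardΞ]; exact Set.ncard_le_ncard (hsubp _) hfinΞ
    exact Nat.cast_le.mpr (by omega)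
  · have hex : ∀ m : Fin (j - r + 1), ∃ Θ : Γ.FacesIn W F,
        v ∈ Θ.1.1 ∧ edgeStar Θ.1.2 v =
          SΩ ∪ (fun a : Fin (j - r) => (g.symm a : V × V)) ''
            {a | (m : ℕ) ≤ (a : ℕ)} := by
      intro m
      have hSsub : SΩ ∪ (fun a : Fin (j - r) => (g.symm a : V × V)) ''
          {a | (m : ℕ) ≤ (a : ℕ)} ⊆ edgeStar F v := by
        rintro x (hx | ⟨a, _, rfl⟩)
        · exact hΩΞ hx
        · exact (g.symm a).2.1
      obtain ⟨W', F', hN, hvW', hstar, hW'W, hF'F⟩ :=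
        Γ.exists_nface_in hΞ hcomp hvW hSsub
      exact ⟨⟨(W', F'), hN.1, hW'W, hF'F⟩, hvW', hstar⟩
    choose q hq1 hq2 using hex
    have hqmono : ∀ m m' : Fin (j - r + 1), (m : ℕ) ≤ (m' : ℕ) → q m ≤ q m' := by
      intro m m' h
      obtain ⟨r1, h1⟩ := (q m).2.1.regular
      obtain ⟨r2, h2⟩ := (q m').2.1.regular
      have hsub : edgeStar (q m').1.2 v ⊆ edgeStar (q m).1.2 v := by
        rw [hq2, hq2]
        exact Set.union_subset_union subset_rfl
          (Set.image_mono (fun a ha => le_trans h ha))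
      have hmono := Γ.nface_mono ⟨(q m').2.1, h2⟩ ⟨(q m).2.1, h1⟩
        (hq1 m') (hq1 m) hsub
      exact (Γ.facesIn_le_def _ _).mpr ⟨hmono.1, hmono.2⟩
    have hqstrict : StrictMono q := by
      intro m m' h
      refine lt_of_le_of_ne (hqmono m m' h.le) ?_
      intro hEq
      have hmlt : (m : ℕ) < j - r := lt_of_lt_of_le h (Nat.lt_succ_iff.mp m'.isLt)
      set a0 : Fin (j - r) := ⟨m, hmlt⟩ with ha0def
      have hx : (g.symm a0 : V × V) ∈ edgeStar (q m).1.2 v := by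
        rw [hq2]; exact Or.inr ⟨a0, by simp [ha0def], rfl⟩
      have hx' : (g.symm a0 : V × V) ∉ edgeStar (q m').1.2 v := by
        rw [hq2]
        rintro (hc | ⟨b, hb, hba⟩)
        · exact (g.symm a0).2.2 hc
        · have hb' : b = a0 := g.symm.injective (Subtype.coe_injective hba)
          rw [hb'] at hb
          exact absurd hb (by simpa [ha0def] using h)
      rw [hEq] at hx; exact hx' hx
    set p : LTSeries (Γ.FacesIn W F) := LTSeries.mk (j - r) q hqstrict with hpdef
    have hp_last : p.last = Ω := by
      have hstar : edgeStar (q (Fin.last _)).1.2 v = SΩ := by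
        rw [hq2, Set.union_eq_left]
        rintro x ⟨a, ha, rfl⟩
        exact absurd (lt_of_lt_of_le a.isLt (by simpa using ha)) (lt_irrefl _)
      obtain ⟨r1, h1⟩ := (q (Fin.last _)).2.1.regular
      have heqf := Γ.nface_eq ⟨(q (Fin.last _)).2.1, h1⟩ hΩ (hq1 _) hv hstar
      exact Subtype.ext (Prod.ext heqf.1 heqf.2)
    have hlen := Order.length_le_height_last (p := p)
    rw [hp_last] at hlen
    simpa [hpdef] using hlen

end Helpers

/-- for a `j`-complete GKM-graph `Γ` and a `j`-face `Ξ = (W, F)`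
of `Γ`, the poset `S` of faces of `Γ` contained in `Ξ`, ordered by reverse
inclusion, is a simplicial poset of dimension `j`: (a) for every `r`-face
`Ω ∈ S` the interval `[Ξ, Ω]` is order-isomorphic to the Boolean lattice of
subsets of a `(j − r)`-element set; in particular (b) the length (height) of
`Ω` in `S` equals `j − dim Ω`, and (c) for each `i < j` the number of elements
of `S` of length `i + 1` equals the number of `(j − i − 1)`-dimensional faces
of `Γ` contained in `Ξ`. -/
theorem facesIn_simplicial_poset {V : Type} {k : ℕ} (Γ : GKMGraph V k)
    (j : ℕ) (hj : 1 ≤ j) (hcomp : Γ.IsComplete j)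
    (W : Set V) (F : Set (V × V)) (hΞ : Γ.IsNFace W F j) :
    (∀ (Ω : Γ.FacesIn W F) (r : ℕ), Γ.IsNFace Ω.1.1 Ω.1.2 r →
      ∃ φ : {Φ : Γ.FacesIn W F // Φ ≤ Ω} ≃ Finset (Fin (j - r)),
        ∀ A B : {Φ : Γ.FacesIn W F // Φ ≤ Ω}, A.1 ≤ B.1 ↔ φ A ⊆ φ B) ∧
    (∀ (Ω : Γ.FacesIn W F) (r : ℕ), Γ.IsNFace Ω.1.1 Ω.1.2 r →
      Order.height Ω = (j - r : ℕ)) ∧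
    (∀ i : ℕ, i < j →
      {Ω : Γ.FacesIn W F | Order.height Ω = (i + 1 : ℕ)}.ncard =
        {Ω : Γ.FacesIn W F | Γ.IsNFace Ω.1.1 Ω.1.2 (j - i - 1)}.ncard) := by
  refine ⟨fun Ω r hΩ => Γ.facesIn_partA hΞ hcomp Ω r hΩ,
    fun Ω r hΩ => Γ.facesIn_partB hΞ hcomp Ω r hΩ, ?_⟩
  intro i hi
  congr 1
  ext Ω
  obtain ⟨r, hreg⟩ := Ω.2.1.regular
  have hN : Γ.IsNFace Ω.1.1 Ω.1.2 r := ⟨Ω.2.1, hreg⟩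
  have hb := Γ.facesIn_partB hΞ hcomp Ω r hN
  obtain ⟨v, hv⟩ := Ω.2.1.nonempty
  simp only [Set.mem_setOf_eq]
  constructor
  · intro h
    rw [hb] at h
    have h' : j - r = i + 1 := Nat.cast_inj.mp h
    have hr : r = j - i - 1 := by omega
    exact hr ▸ hN
  · intro h
    have hr : r = j - i - 1 := by
      have h1 := (hreg v hv).2
      have h2 := (h.2 v hv).2
      omega
    rw [hb]
    exact Nat.cast_inj.mpr (by omega)
end

section
/- Let d ≥ 0 and 0 ≤ q ≤ d+1 be integers. Let j_1, …, j_q be distinct indices in {1, …, d+1} with signs σ_1, …, σ_q ∈ {+1, −1}, let m_{q+1} < m_{q+2} < … < m_{d+1} be nonnegative integers, and let ε_{p,s} ∈ {+1, −1} for p ∈ {1, …, d+1} and s ∈ {q+1, …, d+1}. Let M be the (d+1)×(d+1) matrix with entries in the multivariate polynomial ring ℤ[t_1, …, t_{d+1}] whose s-th column, for s ≤ q, is σ_s times the j_s-th standard basis vector, and whose s-th column, for s > q, has p-th entry ε_{p,s}·t_p^{m_s}. Then det M is a nonzero polynomial in ℤ[t_1, …, t_{d+1}]. -/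
open MvPolynomial

section Aux

variable {d : ℕ}

private lemma prod_monomial_eq {ι : Type*} (F : Finset ι) (f : ι → (Fin (d+1) →₀ ℕ)) :
    (∏ s ∈ F, (monomial (f s) (1 : ℤ) : MvPolynomial (Fin (d+1)) ℤ))
      = monomial (∑ s ∈ F, f s) 1 := by
  classical
  induction F using Finset.induction with
  | empty => simp
  | @insert a s h ih =>
    rw [Finset.prod_insert h, Finset.sum_insert h, ih, monomial_mul, one_mul]

end Aux

/-- nonvanishing of the generalized Vandermonde-type minors of
the weight matrix of the GKM-graph `Γ(d,r)`.  The `(d+1)×(d+1)` matrix `M`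
over `ℤ[t_1, …, t_{d+1}]` whose first `q` columns (indices `s < q`) are signed
distinct standard basis vectors `σ_s · e_{j_s}`, and whose remaining columns
have `p`-th entry `ε_{p,s} · t_p^{m_s}` with strictly increasing exponents
`m_s`, has nonzero determinant. -/
theorem vandermonde_minor_ne_zero (d q : ℕ) (hq : q ≤ d + 1)
    (jmap : Fin q → Fin (d + 1)) (hjmap : Function.Injective jmap)
    (σ : Fin q → ℤ) (hσ : ∀ s, σ s = 1 ∨ σ s = -1)
    (m : Fin (d + 1) → ℕ)
    (hm : ∀ s t : Fin (d + 1), q ≤ (s : ℕ) → s < t → m s < m t)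
    (ε : Fin (d + 1) → Fin (d + 1) → ℤ) (hε : ∀ p s, ε p s = 1 ∨ ε p s = -1) :
    Matrix.det (Matrix.of fun p s : Fin (d + 1) =>
      if h : (s : ℕ) < q then
        (if p = jmap ⟨s, h⟩ then (MvPolynomial.C (σ ⟨s, h⟩) : MvPolynomial (Fin (d + 1)) ℤ) else 0)
      else
        MvPolynomial.C (ε p s) * (MvPolynomial.X p : MvPolynomial (Fin (d + 1)) ℤ) ^ m s) ≠ 0 := by
  classical
  set M : Matrix (Fin (d+1)) (Fin (d+1)) (MvPolynomial (Fin (d+1)) ℤ) :=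
    Matrix.of fun p s : Fin (d + 1) =>
      if h : (s : ℕ) < q then
        (if p = jmap ⟨s, h⟩ then (MvPolynomial.C (σ ⟨s, h⟩) : MvPolynomial (Fin (d + 1)) ℤ) else 0)
      else
        MvPolynomial.C (ε p s) * (MvPolynomial.X p : MvPolynomial (Fin (d + 1)) ℤ) ^ m s
    with hM
  -- "good" permutations: those matching `jmap` on the first `q` columns
  set Good : Equiv.Perm (Fin (d+1)) → Prop :=
    fun π => ∀ (s : Fin (d+1)) (h : (s : ℕ) < q), π s = jmap ⟨s, h⟩ with hGood
  -- the injectivity of `m` on large indices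
  have hminj : ∀ s t : Fin (d+1), q ≤ (s : ℕ) → q ≤ (t : ℕ) → m s = m t → s = t := by
    intro s t hs ht he
    by_contra hne
    rcases lt_or_gt_of_ne hne with h | h
    · exact absurd he (Nat.ne_of_lt (hm s t hs h))
    · exact absurd he.symm (Nat.ne_of_lt (hm t s ht h))
  -- the large column set
  set L : Finset (Fin (d+1)) := Finset.univ.filter (fun s => q ≤ (s : ℕ)) with hL
  -- exponent multi-index of a permutation
  set ν : Equiv.Perm (Fin (d+1)) → (Fin (d+1) →₀ ℕ) :=
    fun π => ∑ s ∈ L, Finsupp.single (π s) (m s) with hν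
  -- evaluation of ν
  have hνeval : ∀ (π : Equiv.Perm (Fin (d+1))) (s : Fin (d+1)), s ∈ L →
      ν π (π s) = m s := by
    intro π s hs
    rw [hν]
    rw [Finsupp.finset_sum_apply]
    rw [Finset.sum_eq_single s]
    · simp
    · intro t _ hts
      exact Finsupp.single_eq_of_ne' (fun h => hts (π.injective h))
    · intro h; exact absurd hs h
  -- for good π and large s, π s avoids the range of jmap
  have hrange : ∀ (π : Equiv.Perm (Fin (d+1))), Good π → ∀ s ∈ L,
      ∀ j : Fin q, jmap j ≠ π s := by
    intro π hπ s hs j hj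
    have hjq : (j : ℕ) < q := j.2
    have : π ⟨(j : ℕ), lt_of_lt_of_le hjq hq⟩ = jmap ⟨(j : ℕ), hjq⟩ := hπ _ hjq
    have hj' : jmap j = jmap ⟨(j : ℕ), hjq⟩ := by congr 1
    have : π ⟨(j : ℕ), lt_of_lt_of_le hjq hq⟩ = π s := by rw [this, ← hj', hj]
    have := π.injective this
    have hsL : q ≤ (s : ℕ) := (Finset.mem_filter.mp hs).2
    rw [← this] at hsL
    simp at hsL
    omega
  -- injectivity of ν on good permutations
  have hνinj : ∀ π₁ π₂ : Equiv.Perm (Fin (d+1)), Good π₁ → Good π₂ →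
      ν π₁ = ν π₂ → π₁ = π₂ := by
    intro π₁ π₂ h₁ h₂ he
    ext s
    rcases lt_or_ge (s : ℕ) q with hs | hs
    · rw [h₁ s hs, h₂ s hs]
    · have hsL : s ∈ L := Finset.mem_filter.mpr ⟨Finset.mem_univ _, hs⟩
      -- find s' with π₂ s' = π₁ s
      set s' := π₂.symm (π₁ s) with hs'
      have hπ₂s' : π₂ s' = π₁ s := π₂.apply_symm_apply _
      have hs'L : s' ∈ L := by
        by_contra h
        have hs'q : (s' : ℕ) < q := by
          by_contra h'
          exact h (Finset.mem_filter.mpr ⟨Finset.mem_univ _, le_of_not_gt h'⟩)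
        have := h₂ s' hs'q
        exact hrange π₁ h₁ s hsL ⟨s', hs'q⟩ (by rw [← this, hπ₂s'])
      have e1 : ν π₁ (π₁ s) = m s := hνeval π₁ s hsL
      have e2 : ν π₂ (π₁ s) = m s' := by rw [← hπ₂s']; exact hνeval π₂ s' hs'L
      have : m s = m s' := by rw [← e1, ← e2, he]
      have hss' : s = s' :=
        hminj s s' (Finset.mem_filter.mp hsL).2 (Finset.mem_filter.mp hs'L).2 this
      rw [← hπ₂s']
      exact congrArg Fin.val (congrArg (⇑π₂) hss'.symm)
  -- the unit coefficient of a permutation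
  set cval : Equiv.Perm (Fin (d+1)) → ℤ :=
    fun π => ∏ s : Fin (d+1),
      (if h : (s : ℕ) < q then σ ⟨s, h⟩ else ε (π s) s) with hcval
  have hcval_ne : ∀ π, cval π ≠ 0 := by
    intro π
    rw [hcval]
    rw [Finset.prod_ne_zero_iff]
    intro s _
    split
    · rcases hσ _ with h | h <;> rw [h] <;> norm_num
    · rcases hε _ _ with h | h <;> rw [h] <;> norm_num
  -- the product for a good permutation
  have hprod : ∀ π : Equiv.Perm (Fin (d+1)), Good π →
      (∏ s, M (π s) s) = C (cval π) * monomial (ν π) 1 := by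
    intro π hπ
    have : ∀ s : Fin (d+1), M (π s) s
        = C (if h : (s : ℕ) < q then σ ⟨s, h⟩ else ε (π s) s)
          * monomial (if (s : ℕ) < q then 0 else Finsupp.single (π s) (m s)) 1 := by
      intro s
      simp only [hM, Matrix.of_apply]
      by_cases h : (s : ℕ) < q
      · rw [dif_pos h, dif_pos h, if_pos h, if_pos (hπ s h), monomial_zero', ← C_mul, mul_one]
      · rw [dif_neg h, dif_neg h, if_neg h, X_pow_eq_monomial]
    rw [Finset.prod_congr rfl (fun s _ => this s)]
    rw [Finset.prod_mul_distrib, ← map_prod, prod_monomial_eq]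
    have hexp : (∑ s : Fin (d+1),
        if (s : ℕ) < q then (0 : Fin (d+1) →₀ ℕ) else Finsupp.single (π s) (m s)) = ν π := by
      rw [hν]
      simp only [hL]
      rw [Finset.sum_filter]
      refine Finset.sum_congr rfl (fun s _ => ?_)
      rcases lt_or_ge (s : ℕ) q with h | h
      · rw [if_pos h, if_neg (not_le.mpr h)]
      · rw [if_neg (not_lt.mpr h), if_pos h]
    rw [hexp]
  -- the product for a bad permutation vanishes
  have hprod0 : ∀ π : Equiv.Perm (Fin (d+1)), ¬ Good π → (∏ s, M (π s) s) = 0 := by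
    intro π hπ
    simp only [hGood, not_forall] at hπ
    obtain ⟨s, h, hne⟩ := hπ
    refine Finset.prod_eq_zero (Finset.mem_univ s) ?_
    rw [hM]
    simp only [Matrix.of_apply]
    rw [dif_pos h, if_neg hne]
  -- construct a good permutation
  have hπ₀ : ∃ π₀ : Equiv.Perm (Fin (d+1)), Good π₀ := by
    let e : {x : Fin (d+1) // (x : ℕ) < q} ≃ {x : Fin (d+1) // x ∈ Set.range jmap} :=
      (⟨fun x => ⟨(x : Fin (d+1)).1, x.2⟩, fun j => ⟨⟨(j : ℕ), lt_of_lt_of_le j.2 hq⟩, j.2⟩,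
        fun x => by ext; rfl, fun j => by ext; rfl⟩ :
          {x : Fin (d+1) // (x : ℕ) < q} ≃ Fin q).trans
      (Equiv.ofInjective jmap hjmap)
    refine ⟨e.extendSubtype, ?_⟩
    intro s h
    rw [Equiv.extendSubtype_apply_of_mem e s h]
    rfl
  obtain ⟨π₀, hπ₀g⟩ := hπ₀
  -- now compute the coefficient at ν π₀
  intro hdet
  have hco : coeff (ν π₀) (Matrix.det M) = 0 := by rw [hdet]; simp
  rw [Matrix.det_apply] at hco
  rw [MvPolynomial.coeff_sum] at hco
  have hterm : ∀ π : Equiv.Perm (Fin (d+1)),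
      coeff (ν π₀) ((Equiv.Perm.sign π) • ∏ s, M (π s) s)
        = (Equiv.Perm.sign π : ℤ) * coeff (ν π₀) (∏ s, M (π s) s) := by
    intro π
    rw [Units.smul_def, MvPolynomial.coeff_smul, smul_eq_mul]
  rw [Finset.sum_congr rfl (fun π _ => hterm π)] at hco
  rw [Finset.sum_eq_single π₀] at hco
  · rw [hprod π₀ hπ₀g, MvPolynomial.coeff_C_mul, MvPolynomial.coeff_monomial,
      if_pos rfl, mul_one] at hco
    exact mul_ne_zero (Units.ne_zero _) (hcval_ne π₀) hco
  · intro π _ hne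
    by_cases hg : Good π
    · rw [hprod π hg, MvPolynomial.coeff_C_mul, MvPolynomial.coeff_monomial,
        if_neg (fun h => hne (hνinj π π₀ hg hπ₀g h)), mul_zero, mul_zero]
    · rw [hprod0 π hg, MvPolynomial.coeff_zero, mul_zero]
  · intro h; exact absurd (Finset.mem_univ π₀) h
end
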